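/- The IN criterion is sound: if for v ∈ F we have d[v] − min( min_{w∈F,(w,v)∈E} c(w,v), min_{w∈U, w'∈F∪U, (w,v)∈E,(w',w)∈E} (c(w,v)+c(w',w)) ) ≤ min_{u∈F} d[u], then d[v] = dist(s,v). -/

import Mathlib

open scoped ENNReal Classical
open Set

variable {V : Type*}

/-- Cost of a path (list of vertices): sum of edge costs of consecutive pairs. -/
noncomputable def pathCost (c : V → V → NNReal) (l : List V) : ℝ≥0∞ :=
  ((l.zip l.tail).map fun p => (c p.1 p.2 : ℝ≥0∞)).sum

/-- `l` is a path from `s` to `v` following edges of `E`. -/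
def IsPath (E : V → V → Prop) (s v : V) (l : List V) : Prop :=
  l.head? = some s ∧ l.getLast? = some v ∧ l.Chain' E

/-- A path from `s` to `v` all of whose intermediate vertices lie in `S`. -/
def IsSPath (E : V → V → Prop) (S : Set V) (s v : V) (l : List V) : Prop :=
  IsPath E s v l ∧ ∀ x ∈ l.dropLast.tail, x ∈ S

/-- Shortest-path distance from `s` to `v` (`∞` if unreachable). -/
noncomputable def gdist (E : V → V → Prop) (c : V → V → NNReal) (s v : V) : ℝ≥0∞ :=
  ⨅ l ∈ {l | IsPath E s v l}, pathCost c l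

/-- Shortest distance from `s` to `v` over paths with intermediates in `S`. -/
noncomputable def sdist (E : V → V → Prop) (c : V → V → NNReal) (S : Set V) (s v : V) : ℝ≥0∞ :=
  ⨅ l ∈ {l | IsSPath E S s v l}, pathCost c l

/-- The invariants of Dijkstra's algorithm for the partition `(S, F, U)` of the
vertex set with tentative distances `d`. -/
structure DijkstraInv (E : V → V → Prop) (c : V → V → NNReal) (s : V)
    (S F U : Set V) (d : V → ℝ≥0∞) : Prop where
  cover : S ∪ F ∪ U = univ
  disjSF : Disjoint S F
  disjSU : Disjoint S U
  disjFU : Disjoint F U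
  settled : ∀ u ∈ S, d u = gdist E c s u
  settledPath : ∀ u ∈ S, ∃ l, IsSPath E S s u l ∧ pathCost c l = d u
  fringe : ∀ u ∈ F, d u = sdist E c S s u ∧ ∃ l, IsSPath E S s u l
  unexplored : ∀ u ∈ U, ¬ ∃ l, IsSPath E S s u l

section INAux

variable {E : V → V → Prop} {c : V → V → NNReal} {S F U : Set V} {s : V} {d : V → ℝ≥0∞}

lemma pathCost_cons_cons (c : V → V → NNReal) (a b : V) (t : List V) :
    pathCost c (a :: b :: t) = (c a b : ℝ≥0∞) + pathCost c (b :: t) := by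
  simp [pathCost]

lemma pathCost_concat' (c : V → V → NNReal) :
    ∀ (l : List V) {w : V}, l.getLast? = some w → ∀ (b : V),
      pathCost c (l ++ [b]) = pathCost c l + (c w b : ℝ≥0∞)
  | [], w, h, b => by simp at h
  | [a], w, h, b => by
      simp only [List.getLast?_singleton, Option.some.injEq] at h
      subst h; simp [pathCost]
  | a :: a' :: t, w, h, b => by
      rw [List.getLast?_cons_cons] at h
      have ih := pathCost_concat' c (a' :: t) h b
      simp only [List.cons_append] at ih ⊢
      rw [pathCost_cons_cons, pathCost_cons_cons, ih, add_assoc]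

lemma concat_of_getLast? {l : List V} {w : V} (h : l.getLast? = some w) :
    l.dropLast ++ [w] = l := by
  have hl : l ≠ [] := by rintro rfl; simp at h
  have hw : l.getLast hl = w := by
    rw [List.getLast?_eq_getLast hl, Option.some.injEq] at h; exact h
  rw [← hw]; exact List.dropLast_append_getLast hl

lemma isPath_concat_elim {m : List V} {b w : V}
    (hw : m.getLast? = some w) (h : IsPath E s b (m ++ [b])) :
    IsPath E s w m ∧ E w b := by
  have hm : m ≠ [] := by rintro rfl; simp at hw
  obtain ⟨a, t, rfl⟩ := List.exists_cons_of_ne_nil hm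
  obtain ⟨h1, h2, h3⟩ := h
  simp only [List.cons_append, List.head?_cons, Option.some.injEq] at h1
  rw [List.Chain', List.isChain_append] at h3
  refine ⟨⟨by simp [h1], hw, h3.1⟩, h3.2.2 w hw b rfl⟩

lemma isSPath_concat {l0 : List V} {w b : V}
    (h : IsSPath E S s w l0) (hwS : w ∈ S) (hE : E w b) :
    IsSPath E S s b (l0 ++ [b]) := by
  obtain ⟨⟨h1, h2, h3⟩, h4⟩ := h
  have hl : l0 ≠ [] := by rintro rfl; simp at h2
  refine ⟨⟨?_, ?_, ?_⟩, ?_⟩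
  · rw [List.head?_append, h1]; rfl
  · simp
  · rw [List.Chain', List.isChain_append]
    refine ⟨h3, List.isChain_singleton b, fun x hx y hy => ?_⟩
    rw [h2] at hx
    simp only [Option.mem_def, Option.some.injEq, List.head?_cons] at hx hy
    subst hx; subst hy; exact hE
  · intro x hx
    rw [List.dropLast_concat] at hx
    have hdec0 : l0.dropLast ++ [w] = l0 := concat_of_getLast? h2
    rcases eq_or_ne l0.dropLast [] with h0 | h0
    · rw [← hdec0, h0] at hx; simp at hx
    · obtain ⟨a, t, heq⟩ := List.exists_cons_of_ne_nil h0
      rw [← hdec0, heq] at hx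
      simp only [List.cons_append, List.tail_cons] at hx
      rcases List.mem_append.mp hx with hx' | hx'
      · exact h4 x (by rw [heq]; exact hx')
      · rw [List.mem_singleton] at hx'; subst hx'; exact hwS

lemma sdist_le' {t : V} {l : List V} (h : IsSPath E S s t l) :
    sdist E c S s t ≤ pathCost c l := iInf₂_le l h

lemma gdist_le' {t : V} {l : List V} (h : IsPath E s t l) :
    gdist E c s t ≤ pathCost c l := iInf₂_le l h

lemma mem_F_of (hcov : S ∪ F ∪ U = univ) {x : V} (hS : x ∉ S) (hU : x ∉ U) : x ∈ F := by
  have hx : x ∈ S ∪ F ∪ U := hcov.symm ▸ mem_univ x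
  rcases hx with (h | h) | h
  exacts [absurd h hS, h, absurd h hU]

/-- Any path ending outside `S` costs at least the minimum fringe value. -/
lemma fringe_bound (hinv : DijkstraInv E c s S F U d) (l : List V) :
    ∀ t : V, IsPath E s t l → t ∉ S → (⨅ u ∈ F, d u) ≤ pathCost c l := by
  induction l using List.reverseRecOn with
  | nil => intro t h _; exact absurd h.1 (by simp)
  | append_singleton m b ih =>
    intro t h htS
    have hb : b = t := by
      have h2 := h.2.1
      rw [List.getLast?_concat, Option.some.injEq] at h2
      exact h2
    subst hb
    rcases eq_or_ne m [] with rfl | hm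
    · simp only [List.nil_append] at h ⊢
      have hsp : IsSPath E S s b [b] := ⟨h, by simp⟩
      have hbU : b ∉ U := fun hU => hinv.unexplored b hU ⟨[b], hsp⟩
      have hbF : b ∈ F := mem_F_of hinv.cover htS hbU
      calc (⨅ u ∈ F, d u) ≤ d b := iInf₂_le b hbF
        _ = sdist E c S s b := (hinv.fringe b hbF).1
        _ ≤ pathCost c [b] := sdist_le' hsp
    · obtain ⟨w, hw⟩ : ∃ w, m.getLast? = some w := ⟨_, List.getLast?_eq_getLast hm⟩
      obtain ⟨hpm, hE⟩ := isPath_concat_elim hw h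
      have hcost : pathCost c (m ++ [b]) = pathCost c m + (c w b : ℝ≥0∞) :=
        pathCost_concat' c m hw b
      by_cases hwS : w ∈ S
      · obtain ⟨l0, hl0, hc0⟩ := hinv.settledPath w hwS
        have hsp : IsSPath E S s b (l0 ++ [b]) := isSPath_concat hl0 hwS hE
        have hbU : b ∉ U := fun hU => hinv.unexplored b hU ⟨_, hsp⟩
        have hbF : b ∈ F := mem_F_of hinv.cover htS hbU
        calc (⨅ u ∈ F, d u) ≤ d b := iInf₂_le b hbF
          _ = sdist E c S s b := (hinv.fringe b hbF).1
          _ ≤ pathCost c (l0 ++ [b]) := sdist_le' hsp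
          _ = d w + (c w b : ℝ≥0∞) := by rw [pathCost_concat' c l0 hl0.1.2.1 b, hc0]
          _ = gdist E c s w + (c w b : ℝ≥0∞) := by rw [hinv.settled w hwS]
          _ ≤ pathCost c m + (c w b : ℝ≥0∞) := add_le_add_left (gdist_le' hpm) _
          _ = pathCost c (m ++ [b]) := hcost.symm
      · calc (⨅ u ∈ F, d u) ≤ pathCost c m := ih w hpm hwS
          _ ≤ pathCost c m + (c w b : ℝ≥0∞) := le_self_add
          _ = pathCost c (m ++ [b]) := hcost.symm

end INAux

/-- Soundness of the IN criterion. -/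
theorem IN_sound (E : V → V → Prop) (c : V → V → NNReal) (s : V)
    (S F U : Set V) (d : V → ℝ≥0∞) (hinv : DijkstraInv E c s S F U d)
    (v : V) (hv : v ∈ F)
    (hIN : d v -
        min (⨅ w ∈ {w | w ∈ F ∧ E w v}, (c w v : ℝ≥0∞))
          (⨅ p ∈ {p : V × V | p.1 ∈ U ∧ p.2 ∈ F ∪ U ∧ E p.1 v ∧ E p.2 p.1},
            ((c p.1 v : ℝ≥0∞) + (c p.2 p.1 : ℝ≥0∞)))
      ≤ ⨅ u ∈ F, d u) :
    d v = gdist E c s v := by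
  obtain ⟨hdv, _⟩ := hinv.fringe v hv
  refine le_antisymm ?_ ?_
  · -- d v ≤ gdist
    refine le_iInf₂ fun l hl => ?_
    have hl' : IsPath E s v l := hl
    by_cases hall : ∀ x ∈ l.dropLast.tail, x ∈ S
    · rw [hdv]; exact sdist_le' ⟨hl', hall⟩
    push_neg at hall
    obtain ⟨x, hx, hxS⟩ := hall
    have hKey := tsub_le_iff_right.mp hIN
    have hmt : l.dropLast.tail ≠ [] := List.ne_nil_of_mem hx
    have hmne : l.dropLast ≠ [] := fun h => hmt (by rw [h]; rfl)
    obtain ⟨w, hw⟩ : ∃ w, l.dropLast.getLast? = some w :=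
      ⟨_, List.getLast?_eq_getLast hmne⟩
    have hdecl : l.dropLast ++ [v] = l := concat_of_getLast? hl'.2.1
    have hlpath : IsPath E s v (l.dropLast ++ [v]) := by rw [hdecl]; exact hl'
    obtain ⟨hpm, hEwv⟩ := isPath_concat_elim hw hlpath
    have hcost : pathCost c l = pathCost c l.dropLast + (c w v : ℝ≥0∞) := by
      conv_lhs => rw [← hdecl]
      rw [pathCost_concat' c _ hw]
    have hwmem : w ∈ S ∪ F ∪ U := hinv.cover.symm ▸ mem_univ w
    rcases hwmem with (hwS | hwF) | hwU
    · -- w ∈ S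
      obtain ⟨l0, hl0, hc0⟩ := hinv.settledPath w hwS
      have hsp : IsSPath E S s v (l0 ++ [v]) := isSPath_concat hl0 hwS hEwv
      calc d v = sdist E c S s v := hdv
        _ ≤ pathCost c (l0 ++ [v]) := sdist_le' hsp
        _ = d w + (c w v : ℝ≥0∞) := by rw [pathCost_concat' c l0 hl0.1.2.1 v, hc0]
        _ = gdist E c s w + (c w v : ℝ≥0∞) := by rw [hinv.settled w hwS]
        _ ≤ pathCost c l.dropLast + (c w v : ℝ≥0∞) := add_le_add_left (gdist_le' hpm) _
        _ = pathCost c l := hcost.symm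
    · -- w ∈ F
      have hM1 : min (⨅ w ∈ {w | w ∈ F ∧ E w v}, (c w v : ℝ≥0∞))
          (⨅ p ∈ {p : V × V | p.1 ∈ U ∧ p.2 ∈ F ∪ U ∧ E p.1 v ∧ E p.2 p.1},
            ((c p.1 v : ℝ≥0∞) + (c p.2 p.1 : ℝ≥0∞))) ≤ (c w v : ℝ≥0∞) :=
        (min_le_left _ _).trans (iInf₂_le w ⟨hwF, hEwv⟩)
      have hwnS : w ∉ S := Set.disjoint_right.mp hinv.disjSF hwF
      have hfb : (⨅ u ∈ F, d u) ≤ pathCost c l.dropLast :=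
        fringe_bound hinv l.dropLast w hpm hwnS
      calc d v ≤ (⨅ u ∈ F, d u) + _ := hKey
        _ ≤ pathCost c l.dropLast + (c w v : ℝ≥0∞) := add_le_add hfb hM1
        _ = pathCost c l := hcost.symm
    · -- w ∈ U
      have hm2 : l.dropLast.dropLast ≠ [] := by
        intro h
        apply hmt
        have hlen : l.dropLast.tail.length = l.dropLast.dropLast.length := by
          simp [List.length_tail, List.length_dropLast]
        rw [h] at hlen
        exact List.eq_nil_of_length_eq_zero hlen
      obtain ⟨w', hw'⟩ : ∃ w', l.dropLast.dropLast.getLast? = some w' :=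
        ⟨_, List.getLast?_eq_getLast hm2⟩
      have hdecm : l.dropLast.dropLast ++ [w] = l.dropLast := concat_of_getLast? hw
      have hpm2 : IsPath E s w (l.dropLast.dropLast ++ [w]) := by rw [hdecm]; exact hpm
      obtain ⟨hpm', hEw'w⟩ := isPath_concat_elim hw' hpm2
      have hw'nS : w' ∉ S := by
        intro hw'S
        obtain ⟨l0, hl0, _⟩ := hinv.settledPath w' hw'S
        exact hinv.unexplored w hwU ⟨l0 ++ [w], isSPath_concat hl0 hw'S hEw'w⟩
      have hw'FU : w' ∈ F ∪ U := by
        have hx' : w' ∈ S ∪ F ∪ U := hinv.cover.symm ▸ mem_univ w'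
        rcases hx' with (h | h) | h
        exacts [absurd h hw'nS, Or.inl h, Or.inr h]
      have hM2 : min (⨅ w ∈ {w | w ∈ F ∧ E w v}, (c w v : ℝ≥0∞))
          (⨅ p ∈ {p : V × V | p.1 ∈ U ∧ p.2 ∈ F ∪ U ∧ E p.1 v ∧ E p.2 p.1},
            ((c p.1 v : ℝ≥0∞) + (c p.2 p.1 : ℝ≥0∞)))
          ≤ (c w v : ℝ≥0∞) + (c w' w : ℝ≥0∞) :=
        (min_le_right _ _).trans (iInf₂_le (w, w') ⟨hwU, hw'FU, hEwv, hEw'w⟩)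
      have hfb : (⨅ u ∈ F, d u) ≤ pathCost c l.dropLast.dropLast :=
        fringe_bound hinv _ w' hpm' hw'nS
      have hcostm : pathCost c l.dropLast
          = pathCost c l.dropLast.dropLast + (c w' w : ℝ≥0∞) := by
        conv_lhs => rw [← hdecm]
        rw [pathCost_concat' c _ hw']
      calc d v ≤ (⨅ u ∈ F, d u) + _ := hKey
        _ ≤ pathCost c l.dropLast.dropLast + ((c w v : ℝ≥0∞) + (c w' w : ℝ≥0∞)) :=
            add_le_add hfb hM2
        _ = (pathCost c l.dropLast.dropLast + (c w' w : ℝ≥0∞)) + (c w v : ℝ≥0∞) := by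
            ring
        _ = pathCost c l.dropLast + (c w v : ℝ≥0∞) := by rw [hcostm]
        _ = pathCost c l := hcost.symm
  · -- gdist ≤ d v
    rw [hdv]
    exact le_iInf₂ fun l hl => gdist_le' hl.1
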